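/- arXiv:1906.02149 — 2 statements merged into one kernel-verified Lean document; each statement's English description precedes it below -/
import Mathlib

section
/- Let S be a restriction semigroup, T an inverse semigroup regarded as a restriction semigroup, and φ: S → T a map satisfying (PM1) (φ(s)φ(t) ≤ φ(st) for all s, t), (LSl') (φ(s)φ(t) = φ(s)^+ φ(st) whenever t^+ ≤ s^*) and (LSr') (φ(s)φ(t) = φ(st)φ(t)^* whenever s^* ≤ t^+). Then φ also satisfies (PM2) (φ(s)^* ≤ φ(s^*) for all s) and (PM3) (φ(s)^+ ≤ φ(s^+) for all s), i.e., φ is a premorphism. -/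
/-! Applying (LSl') to the pair `(s, s^*)` and (LSr') to `(s^+, s)` gives
`φ(s) φ(s^*) = φ(s)` and `φ(s^+) φ(s) = φ(s)`. Hence `φ(s)^* = φ(s)^* φ(s^*)` and
`φ(s)^+ = φ(s^+) φ(s)^+`. The second is already (PM3); the first gives (PM2) because in an
inverse semigroup `e a = a (a⁻¹ e a)` with `a⁻¹ e a` idempotent, which rests on idempotents
commuting. -/

/-- A (two-sided) restriction semigroup: a semigroup with unary operations
`rstar` (`x ↦ x^*`) and `rplus` (`x ↦ x^+`) satisfying the standard identities. -/
class RestrictionSemigroup (S : Type*) extends Semigroup S where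
  rstar : S → S
  rplus : S → S
  rplus_mul_self : ∀ x : S, rplus x * x = x
  rplus_comm : ∀ x y : S, rplus x * rplus y = rplus y * rplus x
  rplus_rplus_mul : ∀ x y : S, rplus (rplus x * y) = rplus x * rplus y
  mul_rplus : ∀ x y : S, rplus (x * y) * x = x * rplus y
  mul_rstar_self : ∀ x : S, x * rstar x = x
  rstar_comm : ∀ x y : S, rstar x * rstar y = rstar y * rstar x
  rstar_mul_rstar : ∀ x y : S, rstar (x * rstar y) = rstar x * rstar y
  rstar_mul : ∀ x y : S, y * rstar (x * y) = rstar x * y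
  rstar_rplus : ∀ x : S, rstar (rplus x) = rplus x
  rplus_rstar : ∀ x : S, rplus (rstar x) = rstar x

open RestrictionSemigroup

/-- `e` is a projection: `e ∈ P(S) = {s^* : s ∈ S}`. -/
def IsProj {S : Type*} [RestrictionSemigroup S] (e : S) : Prop :=
  ∃ s : S, rstar s = e

/-- The natural partial order: `s ≤ t` iff `s = t f` for some projection `f`. -/
def rle {S : Type*} [RestrictionSemigroup S] (s t : S) : Prop :=
  ∃ f : S, IsProj f ∧ s = t * f

/-- Compatibility: `s ∼ t` iff `s t^* = t s^*` and `t^+ s = s^+ t`. -/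
def compat {S : Type*} [RestrictionSemigroup S] (s t : S) : Prop :=
  s * rstar t = t * rstar s ∧ rplus t * s = rplus s * t

/-- An inverse semigroup: each element has a unique (von Neumann) inverse. -/
class InverseSemigroup (S : Type*) extends Semigroup S where
  inv : S → S
  mul_inv_mul : ∀ a : S, a * inv a * a = a
  inv_mul_inv : ∀ a : S, inv a * a * inv a = inv a
  inv_unique : ∀ a b : S, a * b * a = a → b * a * b = b → b = inv a

/-- `s^* = s⁻¹ s` when an inverse semigroup is regarded as a restriction semigroup. -/
def istar {S : Type*} [InverseSemigroup S] (s : S) : S := InverseSemigroup.inv s * s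

/-- `s^+ = s s⁻¹` when an inverse semigroup is regarded as a restriction semigroup. -/
def iplus {S : Type*} [InverseSemigroup S] (s : S) : S := s * InverseSemigroup.inv s

/-- `e ∈ P(S) = {s^* : s ∈ S}` for an inverse semigroup. -/
def iIsProj {S : Type*} [InverseSemigroup S] (e : S) : Prop := ∃ s : S, istar s = e

/-- The natural partial order on an inverse semigroup regarded as a restriction semigroup. -/
def ile {S : Type*} [InverseSemigroup S] (s t : S) : Prop :=
  ∃ f : S, iIsProj f ∧ s = t * f

namespace InverseSemigroup

variable {T : Type*} [InverseSemigroup T]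

theorem inv_inv (a : T) : inv (inv a) = a :=
  (inv_unique (inv a) a (inv_mul_inv a) (mul_inv_mul a)).symm

theorem inv_eq_self_of_isIdempotentElem {e : T} (he : IsIdempotentElem e) : inv e = e :=
  (inv_unique e e (by rw [he.eq, he.eq]) (by rw [he.eq, he.eq])).symm

theorem isIdempotentElem_istar (a : T) : IsIdempotentElem (istar a) := by
  rw [IsIdempotentElem, istar, ← mul_assoc, inv_mul_inv]

theorem isIdempotentElem_iplus (a : T) : IsIdempotentElem (iplus a) := by
  rw [IsIdempotentElem, iplus, ← mul_assoc, mul_inv_mul]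

theorem iIsProj_of_isIdempotentElem {e : T} (he : IsIdempotentElem e) : iIsProj e :=
  ⟨e, by rw [istar, inv_eq_self_of_isIdempotentElem he, he.eq]⟩

/-- `f (ef)⁻¹ e` is an inverse of `ef`, hence equals `(ef)⁻¹`, which is then
idempotent, so `ef = ((ef)⁻¹)⁻¹ = (ef)⁻¹` is idempotent too. -/
theorem isIdempotentElem_mul {e f : T} (he : IsIdempotentElem e) (hf : IsIdempotentElem f) :
    IsIdempotentElem (e * f) := by
  set x := inv (e * f) with hx
  have hax : e * f * x * e * f = e * f := by simpa only [← mul_assoc] using mul_inv_mul (e * f)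
  have hxa : x * e * f * x = x := by simpa only [← mul_assoc] using inv_mul_inv (e * f)
  have hinv : f * x * e = x := by
    refine inv_unique (e * f) (f * x * e) ?_ ?_
    · simp only [← mul_assoc, he.mul_mul_self, hf.mul_mul_self, hax]
    · calc f * x * e * (e * f) * (f * x * e) = f * (x * e * f * x) * e := by
            simp only [← mul_assoc, he.mul_mul_self, hf.mul_mul_self]
        _ = f * x * e := by rw [hxa]
  have hxx : IsIdempotentElem x :=
    calc x * x = f * x * e * (f * x * e) := by rw [hinv]
      _ = f * (x * e * f * x) * e := by simp only [← mul_assoc]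
      _ = x := by rw [hxa, hinv]
  have hself : e * f = x := by rw [← inv_inv (e * f), ← hx, inv_eq_self_of_isIdempotentElem hxx]
  rw [hself]
  exact hxx

theorem commute_of_isIdempotentElem {e f : T} (he : IsIdempotentElem e)
    (hf : IsIdempotentElem f) : Commute e f := by
  have hef := isIdempotentElem_mul he hf
  have hfe := isIdempotentElem_mul hf he
  have hinv : f * e = inv (e * f) := by
    refine inv_unique (e * f) (f * e) ?_ ?_
    · simpa only [← mul_assoc, he.mul_mul_self, hf.mul_mul_self] using hef.eq
    · simpa only [← mul_assoc, he.mul_mul_self, hf.mul_mul_self] using hfe.eq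
  rw [Commute, SemiconjBy, hinv, inv_eq_self_of_isIdempotentElem hef]

theorem ile_mul_of_isIdempotentElem {e : T} (he : IsIdempotentElem e) (a : T) :
    ile (e * a) a := by
  have hcomm := commute_of_isIdempotentElem he (isIdempotentElem_iplus a)
  have hfactor : a * (inv a * e * a) = e * a := by
    rw [← mul_assoc, ← mul_assoc, ← iplus, ← hcomm.eq, mul_assoc, iplus, mul_inv_mul]
  refine ⟨inv a * e * a, iIsProj_of_isIdempotentElem ?_, hfactor.symm⟩
  calc inv a * e * a * (inv a * e * a) = inv a * (e * (a * (inv a * e * a))) := by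
        simp only [mul_assoc]
    _ = inv a * e * a := by rw [hfactor, he.mul_self_mul, mul_assoc]

end InverseSemigroup

theorem rle_refl {S : Type*} [RestrictionSemigroup S] (s : S) : rle s s :=
  ⟨rstar s, ⟨s, rfl⟩, (mul_rstar_self s).symm⟩

open InverseSemigroup

theorem ile_istar_map_rstar {S T : Type*} [RestrictionSemigroup S] [InverseSemigroup T]
    (φ : S → T)
    (hLSl' : ∀ s t : S, rle (rplus t) (rstar s) → φ s * φ t = iplus (φ s) * φ (s * t))
    (s : S) : ile (istar (φ s)) (φ (rstar s)) := by
  have hright : φ s * φ (rstar s) = φ s := by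
    rw [hLSl' s (rstar s) (by rw [rplus_rstar]; exact rle_refl _), mul_rstar_self, iplus,
      mul_inv_mul]
  have hfactor : istar (φ s) = istar (φ s) * φ (rstar s) := by rw [istar, mul_assoc, hright]
  rw [hfactor]
  exact ile_mul_of_isIdempotentElem (isIdempotentElem_istar _) _

theorem ile_iplus_map_rplus {S T : Type*} [RestrictionSemigroup S] [InverseSemigroup T]
    (φ : S → T)
    (hLSr' : ∀ s t : S, rle (rstar s) (rplus t) → φ s * φ t = φ (s * t) * istar (φ t))
    (s : S) : ile (iplus (φ s)) (φ (rplus s)) := by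
  have hleft : φ (rplus s) * φ s = φ s := by
    rw [hLSr' (rplus s) s (by rw [rstar_rplus]; exact rle_refl _), rplus_mul_self, istar,
      ← mul_assoc, mul_inv_mul]
  exact ⟨iplus (φ s), iIsProj_of_isIdempotentElem (isIdempotentElem_iplus _),
    by rw [iplus, ← mul_assoc, hleft]⟩

theorem stmt11_general {S T : Type*} [RestrictionSemigroup S] [InverseSemigroup T]
    (φ : S → T)
    (hLSl' : ∀ s t : S, rle (rplus t) (rstar s) → φ s * φ t = iplus (φ s) * φ (s * t))
    (hLSr' : ∀ s t : S, rle (rstar s) (rplus t) → φ s * φ t = φ (s * t) * istar (φ t)) :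
    (∀ s : S, ile (istar (φ s)) (φ (rstar s))) ∧
      (∀ s : S, ile (iplus (φ s)) (φ (rplus s))) :=
  ⟨ile_istar_map_rstar φ hLSl', ile_iplus_map_rplus φ hLSr'⟩

theorem stmt11 {S T : Type*} [RestrictionSemigroup S] [InverseSemigroup T]
    (φ : S → T)
    (hPM1 : ∀ s t : S, ile (φ s * φ t) (φ (s * t)))
    (hLSl' : ∀ s t : S, rle (rplus t) (rstar s) → φ s * φ t = iplus (φ s) * φ (s * t))
    (hLSr' : ∀ s t : S, rle (rstar s) (rplus t) → φ s * φ t = φ (s * t) * istar (φ t)) :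
    (∀ s : S, ile (istar (φ s)) (φ (rstar s))) ∧
      (∀ s : S, ile (iplus (φ s)) (φ (rplus s))) :=
  stmt11_general φ hLSl' hLSr'
end

section
/- Let ψ: T → S be a proper morphism between restriction semigroups, s ∈ S, and e, f ∈ P(T). (1) (Well-definedness of ψ̂_s) If e ≤ t^* and e ≤ r^* where t, r ∈ T satisfy ψ(t) ≤ s and ψ(r) ≤ s, then (t e)^+ = (r e)^+. (2) (Injectivity of ψ̂_s) If e ≤ t^* and f ≤ r^* where t, r ∈ T satisfy ψ(t) ≤ s and ψ(r) ≤ s, and (t e)^+ = (r f)^+, then e = f. -/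
open RestrictionSemigroup

/-!
Two elements of `T` whose images lie below a common bound `s` have equal images as soon as they
share their domain `x^*` (or their range `x^+`), because elements below `s` are the restrictions
`s a^*` (or `a^+ s`) of `s`. Properness makes such elements compatible, and compatible elements
with the same domain (or range) coincide. Applied to `t e` and `r e`, which have domain `e`, this
gives `t e = r e`; applied to `t e` and `r f` with equal ranges, it gives `t e = r f`, whence
`e = (t e)^* = (r f)^* = f`.
-/

section RestrictionSemigroup

variable {S : Type*} [RestrictionSemigroup S]

lemma IsProj.rstar_eq {e : S} (he : IsProj e) : rstar e = e := by
  obtain ⟨a, rfl⟩ := he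
  rw [← rplus_rstar a, rstar_rplus]

lemma IsProj.rplus_eq {e : S} (he : IsProj e) : rplus e = e := by
  obtain ⟨a, rfl⟩ := he
  exact rplus_rstar a

lemma IsProj.mul {e f : S} (he : IsProj e) (hf : IsProj f) : IsProj (e * f) := by
  obtain ⟨a, rfl⟩ := he
  obtain ⟨b, rfl⟩ := hf
  exact ⟨a * rstar b, rstar_mul_rstar a b⟩

lemma rle_mul_proj (a : S) {f : S} (hf : IsProj f) : rle (a * f) a := ⟨f, hf, rfl⟩

lemma rle_trans {a b c : S} (hab : rle a b) (hbc : rle b c) : rle a c := by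
  obtain ⟨f, hf, rfl⟩ := hab
  obtain ⟨g, hg, rfl⟩ := hbc
  exact ⟨g * f, hg.mul hf, mul_assoc c g f⟩

lemma rle.eq_mul_rstar {a c : S} (h : rle a c) : a = c * rstar a := by
  obtain ⟨f, hf, rfl⟩ := h
  rw [← hf.rstar_eq, rstar_mul_rstar, ← mul_assoc, mul_rstar_self]

lemma rle.eq_rplus_mul {a c : S} (h : rle a c) : a = rplus a * c := by
  obtain ⟨f, hf, rfl⟩ := h
  rw [mul_rplus, hf.rplus_eq]

lemma rle.eq_of_rstar_eq {a b c : S} (ha : rle a c) (hb : rle b c)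
    (h : rstar a = rstar b) : a = b := by
  rw [ha.eq_mul_rstar, hb.eq_mul_rstar, h]

lemma rle.eq_of_rplus_eq {a b c : S} (ha : rle a c) (hb : rle b c)
    (h : rplus a = rplus b) : a = b := by
  rw [ha.eq_rplus_mul, hb.eq_rplus_mul, h]

lemma compat.eq_of_rstar_eq {a b : S} (hab : compat a b) (h : rstar a = rstar b) : a = b :=
  calc a = a * rstar b := by rw [← h, mul_rstar_self]
    _ = b * rstar a := hab.1
    _ = b := by rw [h, mul_rstar_self]

lemma compat.eq_of_rplus_eq {a b : S} (hab : compat a b) (h : rplus a = rplus b) : a = b :=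
  calc a = rplus b * a := by rw [← h, rplus_mul_self]
    _ = rplus a * b := hab.2
    _ = b := by rw [h, rplus_mul_self]

lemma rstar_mul_proj_of_rle {t e : S} (he : IsProj e) (h : rle e (rstar t)) :
    rstar (t * e) = e := by
  have hcomm : rstar t * e = e * rstar t := by
    obtain ⟨a, rfl⟩ := he
    exact rstar_comm t a
  have hle : e = e * rstar t := by simpa only [he.rplus_eq] using h.eq_rplus_mul
  rw [← he.rstar_eq, rstar_mul_rstar, he.rstar_eq, hcomm, ← hle]

end RestrictionSemigroup

section Morphism

variable {T S : Type*} [RestrictionSemigroup T] [RestrictionSemigroup S] {ψ : T → S}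

lemma IsProj.map (hstar : ∀ a : T, ψ (rstar a) = rstar (ψ a)) {e : T} (he : IsProj e) :
    IsProj (ψ e) := by
  obtain ⟨a, rfl⟩ := he
  exact ⟨ψ a, (hstar a).symm⟩

lemma map_mul_proj_rle (hmul : ∀ a b : T, ψ (a * b) = ψ a * ψ b)
    (hstar : ∀ a : T, ψ (rstar a) = rstar (ψ a)) {t e : T} {s : S} (he : IsProj e)
    (ht : rle (ψ t) s) : rle (ψ (t * e)) s := by
  rw [hmul]
  exact rle_trans (rle_mul_proj _ (he.map hstar)) ht

lemma eq_of_map_rle_of_rstar_eq (hstar : ∀ a : T, ψ (rstar a) = rstar (ψ a))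
    (hproper : ∀ a b : T, ψ a = ψ b → compat a b) {a b : T} {s : S}
    (ha : rle (ψ a) s) (hb : rle (ψ b) s) (h : rstar a = rstar b) : a = b :=
  (hproper a b (ha.eq_of_rstar_eq hb (by rw [← hstar, ← hstar, h]))).eq_of_rstar_eq h

lemma eq_of_map_rle_of_rplus_eq (hplus : ∀ a : T, ψ (rplus a) = rplus (ψ a))
    (hproper : ∀ a b : T, ψ a = ψ b → compat a b) {a b : T} {s : S}
    (ha : rle (ψ a) s) (hb : rle (ψ b) s) (h : rplus a = rplus b) : a = b :=
  (hproper a b (ha.eq_of_rplus_eq hb (by rw [← hplus, ← hplus, h]))).eq_of_rplus_eq h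

end Morphism

theorem stmt16_general {T S : Type*} [RestrictionSemigroup T] [RestrictionSemigroup S]
    (ψ : T → S)
    (hmul : ∀ a b : T, ψ (a * b) = ψ a * ψ b)
    (hstar : ∀ a : T, ψ (rstar a) = rstar (ψ a))
    (hplus : ∀ a : T, ψ (rplus a) = rplus (ψ a))
    (hproper : ∀ a b : T, ψ a = ψ b → compat a b)
    (s : S) (e f : T) (he : IsProj e) (hf : IsProj f) :
    (∀ t r : T, rle e (rstar t) → rle (ψ t) s → rle e (rstar r) → rle (ψ r) s →
        rplus (t * e) = rplus (r * e)) ∧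
    (∀ t r : T, rle e (rstar t) → rle (ψ t) s → rle f (rstar r) → rle (ψ r) s →
        rplus (t * e) = rplus (r * f) → e = f) := by
  constructor
  · intro t r hte hts hre hrs
    have hdom : rstar (t * e) = rstar (r * e) := by
      rw [rstar_mul_proj_of_rle he hte, rstar_mul_proj_of_rle he hre]
    rw [eq_of_map_rle_of_rstar_eq hstar hproper (map_mul_proj_rle hmul hstar he hts)
      (map_mul_proj_rle hmul hstar he hrs) hdom]
  · intro t r hte hts hrf hrs hran
    have hte_eq : t * e = r * f := eq_of_map_rle_of_rplus_eq hplus hproper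
      (map_mul_proj_rle hmul hstar he hts) (map_mul_proj_rle hmul hstar hf hrs) hran
    rw [← rstar_mul_proj_of_rle he hte, ← rstar_mul_proj_of_rle hf hrf, hte_eq]

theorem stmt16 {T S : Type*} [RestrictionSemigroup T] [RestrictionSemigroup S]
    (ψ : T → S) (hsurj : Function.Surjective ψ)
    (hmul : ∀ a b : T, ψ (a * b) = ψ a * ψ b)
    (hstar : ∀ a : T, ψ (rstar a) = rstar (ψ a))
    (hplus : ∀ a : T, ψ (rplus a) = rplus (ψ a))
    (hproper : ∀ a b : T, ψ a = ψ b → compat a b)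
    (s : S) (e f : T) (he : IsProj e) (hf : IsProj f) :
    (∀ t r : T, rle e (rstar t) → rle (ψ t) s → rle e (rstar r) → rle (ψ r) s →
        rplus (t * e) = rplus (r * e)) ∧
    (∀ t r : T, rle e (rstar t) → rle (ψ t) s → rle f (rstar r) → rle (ψ r) s →
        rplus (t * e) = rplus (r * f) → e = f) :=
  stmt16_general ψ hmul hstar hplus hproper s e f he hf
end
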